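/- Let g be a Lie algebra over ℂ and let κ : g × g → ℂ be a symmetric bilinear form which is invariant, i.e. κ([x,y],z) = κ(x,[y,z]) for all x,y,z ∈ g. On the ℂ-vector space ĝ_κ := (g ⊗ ℂ[t,t⁻¹]) ⊕ ℂ define a bilinear bracket by [(x ⊗ f, a), (y ⊗ g', b)] := ([x,y] ⊗ (f·g'), −κ(x,y)·Res(f dg')), extended bilinearly, where the summand ℂ brackets to zero with everything. Then this bracket is alternating and satisfies the Jacobi identity, so ĝ_κ is a Lie algebra over ℂ; moreover the summand ℂ is a central ideal of ĝ_κ and the projection ĝ_κ → g ⊗ ℂ[t,t⁻¹] onto the loop algebra is a surjective Lie algebra homomorphism with kernel ℂ. (This is the affine Kac–Moody algebra at level κ, in its Laurent-polynomial version.) -/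

import Mathlib

open TensorProduct

/-- The formal derivative of a Laurent polynomial: the derivative of `a·tⁿ` is `n·a·tⁿ⁻¹`,
so that the coefficient of `tⁿ` in `f'` is `(n+1)·f_{n+1}`. -/
noncomputable def lderiv (f : LaurentPolynomial ℂ) : LaurentPolynomial ℂ :=
  Finsupp.sum f.coeff fun n a => LaurentPolynomial.C ((n : ℂ) * a) * LaurentPolynomial.T (n - 1)

/-- The residue of a Laurent polynomial: its coefficient of `t⁻¹`. -/
noncomputable def lres (f : LaurentPolynomial ℂ) : ℂ := (f.coeff : ℤ →₀ ℂ) (-1)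

/-!
`ĝ_κ` is the central extension of the loop algebra by the 2-cocycle attached to the symmetric
invariant form `-κ` (`LieAlgebra.LoopAlgebra.twoCocycleOfBilinear`), realised as the Lie algebra
`LieAlgebra.ofTwoCocycle`. On pure tensors that cocycle is `(f ⊗ x, g ⊗ y) ↦ -κ(x, y) Σₙ n f₋ₙ gₙ`,
and `Σₙ n f₋ₙ gₙ = Res(f g')`, as a check on monomials shows. Transporting the bracket of
`LieAlgebra.ofTwoCocycle` to the product `(ℂ[t,t⁻¹] ⊗ 𝔤) × ℂ` gives `B`, which inherits the Lie
algebra axioms.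
-/

open LieModule.Cohomology

namespace LieAlgebra

variable {R L M : Type*} [CommRing R] [LieRing L] [LieAlgebra R L] [AddCommGroup M] [Module R M]
  (c : twoCocycle R L (TrivialLieModule R L M))

def ofTwoCocycle.linearEquivProd : ofTwoCocycle c ≃ₗ[R] L × M :=
  (ofProd c).symm.linearEquiv R

def twoCocycleBracket : (L × M) →ₗ[R] (L × M) →ₗ[R] L × M :=
  ((LieModule.toEnd R (ofTwoCocycle c) (ofTwoCocycle c) : ofTwoCocycle c →ₗ[R] _).compl₁₂
    (ofTwoCocycle.linearEquivProd c).symm.toLinearMap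
    (ofTwoCocycle.linearEquivProd c).symm.toLinearMap).compr₂
    (ofTwoCocycle.linearEquivProd c).toLinearMap

lemma twoCocycleBracket_eq (u v : L × M) :
    twoCocycleBracket c u v = ofTwoCocycle.linearEquivProd c
      ⁅(ofTwoCocycle.linearEquivProd c).symm u, (ofTwoCocycle.linearEquivProd c).symm v⁆ :=
  rfl

lemma twoCocycleBracket_apply (u v : L × M) :
    twoCocycleBracket c u v = (⁅u.1, v.1⁆, TrivialLieModule.equiv R L M (c.1 u.1 v.1)) := by
  simp only [twoCocycleBracket_eq, bracket_ofTwoCocycle, trivial_lie_zero, add_zero, sub_zero]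
  rfl

lemma twoCocycleBracket_self (v : L × M) : twoCocycleBracket c v v = 0 := by
  rw [twoCocycleBracket_eq, lie_self, map_zero]

lemma twoCocycleBracket_jacobi (u v w : L × M) :
    twoCocycleBracket c u (twoCocycleBracket c v w)
      + twoCocycleBracket c v (twoCocycleBracket c w u)
      + twoCocycleBracket c w (twoCocycleBracket c u v) = 0 := by
  simp only [twoCocycleBracket_eq, LinearEquiv.symm_apply_apply, ← map_add, lie_jacobi, map_zero]

end LieAlgebra

lemma LinearMap.BilinForm.lieInvariant_of_assoc {R L : Type*} [CommRing R] [LieRing L]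
    [LieAlgebra R L] {κ : LinearMap.BilinForm R L} (hκ : ∀ x y z : L, κ ⁅x, y⁆ z = κ x ⁅y, z⁆) :
    κ.lieInvariant L := fun x y z => by
  rw [← lie_skew, map_neg, LinearMap.neg_apply, hκ]

section Laurent

open LaurentPolynomial

lemma lderiv_add (f g : LaurentPolynomial ℂ) : lderiv (f + g) = lderiv f + lderiv g :=
  Finsupp.sum_add_index' (by simp) (by simp [mul_add, add_mul])

lemma lderiv_C_mul_T (a : ℂ) (n : ℤ) : lderiv (C a * T n) = C ((n : ℂ) * a) * T (n - 1) := by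
  rw [← single_eq_C_mul_T]
  exact Finsupp.sum_single_index (by simp)

lemma lres_add (f g : LaurentPolynomial ℂ) : lres (f + g) = lres f + lres g := rfl

lemma lres_C_mul_T (a : ℂ) (n : ℤ) : lres (C a * T n) = if n = -1 then a else 0 := by
  rw [← single_eq_C_mul_T]
  exact Finsupp.single_apply

end Laurent

namespace LieAlgebra.LoopAlgebra

open LaurentPolynomial

variable {𝔤 : Type*} [LieRing 𝔤] [LieAlgebra ℂ 𝔤]

lemma residuePairing_tmul_tmul (κ : LinearMap.BilinForm ℂ 𝔤) (f g : LaurentPolynomial ℂ)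
    (x y : 𝔤) :
    residuePairing ℂ ℤ 𝔤 κ (f ⊗ₜ x) (g ⊗ₜ y) = lres (f * lderiv g) * κ x y := by
  induction f using LaurentPolynomial.induction_on' with
  | add p q hp hq =>
    rw [add_tmul, map_add, LinearMap.add_apply, hp, hq, add_mul, lres_add, add_mul]
  | C_mul_T m a =>
  induction g using LaurentPolynomial.induction_on' with
  | add p q hp hq => rw [add_tmul, map_add, hp, hq, lderiv_add, mul_add, lres_add, add_mul]
  | C_mul_T n b =>
    have hmono (k : ℤ) (c : ℂ) (z : 𝔤) :
        (C c * T k) ⊗ₜ[ℂ] z = AddMonoidAlgebra.single k 1 ⊗ₜ[ℂ] (c • z) := by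
      rw [← single_eq_C_mul_T, ← smul_tmul, AddMonoidAlgebra.smul_single', mul_one]
    have hprod :
        C a * T m * (C ((n : ℂ) * b) * T (n - 1)) = C (a * (n * b)) * T (m + (n - 1)) := by
      simp only [map_mul, T_add]; ring
    rw [lderiv_C_mul_T, hmono, hmono, residuePairing_apply_apply, hprod, lres_C_mul_T]
    simp only [toFinsupp_single_tmul, Finsupp.single_apply]
    rw [Finsupp.sum_single_index (by simp)]
    by_cases h : m = -n
    · rw [if_pos h, if_pos (by omega), zsmul_eq_mul, map_smul, map_smul]
      simp only [LinearMap.smul_apply, smul_eq_mul]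
      ring
    · rw [if_neg h, if_neg (by omega), map_zero, LinearMap.zero_apply, smul_zero, zero_mul]

lemma twoCocycleOfBilinear_tmul_tmul (κ : LinearMap.BilinForm ℂ 𝔤) (hκ : κ.lieInvariant 𝔤)
    (hκs : κ.IsSymm) (f g : LaurentPolynomial ℂ) (x y : 𝔤) :
    TrivialLieModule.equiv ℂ _ ℂ ((twoCocycleOfBilinear ℂ ℤ 𝔤 κ hκ hκs).1 (f ⊗ₜ x) (g ⊗ₜ y)) =
      lres (f * lderiv g) * κ x y :=
  residuePairing_tmul_tmul κ f g x y

end LieAlgebra.LoopAlgebra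

open LieAlgebra

/-- The affine Kac–Moody algebra at level `κ` (Laurent-polynomial version).
Let `𝔤` be a Lie algebra over `ℂ` and `κ` a symmetric invariant bilinear form on `𝔤`.
On `ĝ_κ := (𝔤 ⊗ ℂ[t,t⁻¹]) ⊕ ℂ` there is a (unique) bilinear bracket `B` satisfying
`B (x ⊗ f, a) (y ⊗ g, b) = ([x,y] ⊗ f·g, −κ(x,y)·Res(f dg))`, where `Res(f dg) = Res(f·g')`;
this bracket is alternating and satisfies the Jacobi identity (so `ĝ_κ` is a Lie algebra
over `ℂ`), the summand `ℂ` is central (hence a central ideal), and the projection onto the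
loop algebra `ℂ[t,t⁻¹] ⊗ 𝔤` is a surjective Lie algebra homomorphism whose kernel is the
summand `ℂ`. -/
theorem affine_kac_moody_is_lie_algebra
    (𝔤 : Type*) [LieRing 𝔤] [LieAlgebra ℂ 𝔤]
    (κ : 𝔤 →ₗ[ℂ] 𝔤 →ₗ[ℂ] ℂ)
    (hsymm : ∀ x y : 𝔤, κ x y = κ y x)
    (hinv : ∀ x y z : 𝔤, κ ⁅x, y⁆ z = κ x ⁅y, z⁆) :
    ∃ B : ((LaurentPolynomial ℂ ⊗[ℂ] 𝔤) × ℂ) →ₗ[ℂ]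
          ((LaurentPolynomial ℂ ⊗[ℂ] 𝔤) × ℂ) →ₗ[ℂ] ((LaurentPolynomial ℂ ⊗[ℂ] 𝔤) × ℂ),
      -- the defining formula on pure tensors, extended bilinearly
      (∀ (f g : LaurentPolynomial ℂ) (x y : 𝔤) (a b : ℂ),
        B (f ⊗ₜ[ℂ] x, a) (g ⊗ₜ[ℂ] y, b)
          = ((f * g) ⊗ₜ[ℂ] ⁅x, y⁆, -(κ x y) * lres (f * lderiv g))) ∧
      -- the bracket is alternating
      (∀ v, B v v = 0) ∧
      -- the bracket satisfies the Jacobi identity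
      (∀ u v w, B u (B v w) + B v (B w u) + B w (B u v) = 0) ∧
      -- the summand ℂ is a central ideal
      (∀ (a : ℂ) (v), B (0, a) v = 0 ∧ B v (0, a) = 0) ∧
      -- the projection to the loop algebra is a Lie algebra homomorphism ...
      (∀ v w, (B v w).1 = ⁅v.1, w.1⁆) ∧
      -- ... which is surjective ...
      Function.Surjective
        (Prod.fst : (LaurentPolynomial ℂ ⊗[ℂ] 𝔤) × ℂ → LaurentPolynomial ℂ ⊗[ℂ] 𝔤) ∧
      -- ... with kernel the summand ℂ
      ({v : (LaurentPolynomial ℂ ⊗[ℂ] 𝔤) × ℂ | v.1 = 0}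
        = Set.range (fun a : ℂ => ((0 : LaurentPolynomial ℂ ⊗[ℂ] 𝔤), a))) := by
  have hκ : LinearMap.BilinForm.lieInvariant 𝔤 (-κ) :=
    LinearMap.BilinForm.lieInvariant_of_assoc fun x y z => by
      simp only [LinearMap.neg_apply, hinv]
  set c := LoopAlgebra.twoCocycleOfBilinear ℂ ℤ 𝔤 (-κ) hκ
    (LinearMap.BilinForm.IsSymm.neg ⟨hsymm⟩)
  refine ⟨twoCocycleBracket c, fun f g x y a b => ?_, twoCocycleBracket_self c,
    twoCocycleBracket_jacobi c, fun a v => ?_, fun v w => by rw [twoCocycleBracket_apply],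
    Prod.fst_surjective, ?_⟩
  · rw [twoCocycleBracket_apply, LoopAlgebra.twoCocycleOfBilinear_tmul_tmul,
      ExtendScalars.bracket_tmul, LinearMap.neg_apply, LinearMap.neg_apply, mul_comm (lres _),
      neg_mul]
  · simp [twoCocycleBracket_apply]
  · ext v
    exact ⟨fun h => ⟨v.2, Prod.ext h.symm rfl⟩, by rintro ⟨a, rfl⟩; rfl⟩
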